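/- arXiv:1309.4477 — 3 statements merged into one kernel-verified Lean document; each statement's English description precedes it below -/
import Mathlib

section
/- The set L(V) of Lie elements of k[G] with respect to V is a Lie subalgebra of k[G] (with bracket [x,y] = xy − yx): it is a k-linear subspace, and if x, y ∈ L(V) then xy − yx ∈ L(V). -/
/-!
On group elements `A_m(g) = ⋀^m ρ(g)` is multiplicative. `B_m(g)` extends `ρ(g)` as a
derivation, so in `B_m(g) B_m(h)` the terms in which both factors act on the same slot add up
to `B_m(gh)`, while the remaining terms are symmetric in `g` and `h`; hence
`B_m(gh) - B_m(hg) = [B_m(g), B_m(h)]`. Extended linearly to `k[G]`, `A_m` is multiplicative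
and `B_m` preserves brackets, so for Lie elements `x, y` we get
`A_m[x,y] = [A_m x, A_m y] = [B_m x, B_m y] = B_m[x,y]`.
-/

/-- The wedge product `v₁ ∧ ⋯ ∧ vₘ` of a family of vectors, as an element of the `m`-th
exterior power `⋀[k]^m V`. -/
noncomputable def wedge (k : Type*) [Field k] (V : Type*) [AddCommGroup V] [Module k V]
    (m : ℕ) (v : Fin m → V) : ⋀[k]^m V :=
  ⟨ExteriorAlgebra.ιMulti k m v, ExteriorAlgebra.ιMulti_range k m (Set.mem_range_self v)⟩

open Finset Function

section SumUpdate

variable {ι V M : Type*} [Fintype ι] [DecidableEq ι] [AddCommGroup M]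
  (w : (ι → V) → M) (a b : V → V) (v : ι → V)

theorem sum_offDiag_update_update_comm :
    ∑ x ∈ univ.offDiag, w (update (update v x.1 (b (v x.1))) x.2 (a (v x.2))) =
      ∑ x ∈ univ.offDiag, w (update (update v x.1 (a (v x.1))) x.2 (b (v x.2))) := by
  refine sum_nbij' Prod.swap Prod.swap (by simp [eq_comm]) (by simp [eq_comm]) (by simp)
    (by simp) fun x hx => ?_
  rw [update_comm (mem_offDiag.1 hx).2.2]
  rfl

theorem sum_sum_update_update :
    ∑ q, ∑ p, w (update (update v q (b (v q))) p (a (update v q (b (v q)) p))) =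
      ∑ q, w (update v q (a (b (v q)))) +
        ∑ x ∈ univ.offDiag, w (update (update v x.1 (b (v x.1))) x.2 (a (v x.2))) := by
  rw [← sum_product' (f := fun q p => w (update (update v q (b (v q))) p
    (a (update v q (b (v q)) p)))), ← diag_union_offDiag,
    sum_union (disjoint_diag_offDiag _), diag, sum_map]
  congr 1
  · simp
  · exact sum_congr rfl fun x hx => by rw [update_of_ne (mem_offDiag.1 hx).2.2.symm]

theorem sum_sum_update_update_sub_swap :
    ∑ q, ∑ p, w (update (update v q (b (v q))) p (a (update v q (b (v q)) p))) -
        ∑ q, ∑ p, w (update (update v q (a (v q))) p (b (update v q (a (v q)) p))) =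
      ∑ q, w (update v q (a (b (v q)))) - ∑ q, w (update v q (b (a (v q)))) := by
  rw [sum_sum_update_update, sum_sum_update_update, sum_offDiag_update_update_comm w a b,
    add_sub_add_right_eq_sub]

end SumUpdate

section Wedge

variable {k V N : Type*} [Field k] [AddCommGroup V] [Module k V] [AddCommGroup N] [Module k N]
  {m : ℕ}

theorem wedge_linearMap_ext {f g : ⋀[k]^m V →ₗ[k] N}
    (h : ∀ v, f (wedge k V m v) = g (wedge k V m v)) : f = g :=
  exteriorPower.linearMap_ext (AlternatingMap.ext h)

theorem eq_exteriorPower_map {φ : V →ₗ[k] V} {T : Module.End k (⋀[k]^m V)}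
    (hT : ∀ v, T (wedge k V m v) = wedge k V m fun i => φ (v i)) :
    T = exteriorPower.map m φ :=
  wedge_linearMap_ext fun v => (hT v).trans (exteriorPower.map_apply_ιMulti φ v).symm

variable {G : Type*} [Monoid G] (ρ : Representation k G V)

theorem map_mul_of_apply_wedge (A : G → Module.End k (⋀[k]^m V))
    (hA : ∀ g v, A g (wedge k V m v) = wedge k V m fun i => ρ g (v i)) (g h : G) :
    A (g * h) = A g * A h := by
  rw [eq_exteriorPower_map (hA _), eq_exteriorPower_map (hA g), eq_exteriorPower_map (hA h),
    map_mul, Module.End.mul_eq_comp, exteriorPower.map_comp]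
  rfl

theorem sub_eq_lie_of_apply_wedge (B : G → Module.End k (⋀[k]^m V))
    (hB : ∀ g v, B g (wedge k V m v) = ∑ p, wedge k V m (update v p (ρ g (v p)))) (g h : G) :
    B (g * h) - B (h * g) = ⁅B g, B h⁆ := by
  refine wedge_linearMap_ext fun v => ?_
  simp only [Ring.lie_def, LinearMap.sub_apply, Module.End.mul_apply, hB, map_sum, map_mul]
  exact (sum_sum_update_update_sub_swap (wedge k V m) (ρ g) (ρ h) v).symm

end Wedge

namespace MonoidAlgebra

variable {k G R : Type*} [CommRing k]

theorem bilinear_ext {M : Type*} [AddCommMonoid M] [Module k M]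
    {Φ Ψ : MonoidAlgebra k G →ₗ[k] MonoidAlgebra k G →ₗ[k] M}
    (h : ∀ g g', Φ (single g 1) (single g' 1) = Ψ (single g 1) (single g' 1)) : Φ = Ψ :=
  lhom_ext' fun g => LinearMap.ext_ring <| lhom_ext' fun g' => LinearMap.ext_ring (h g g')

variable [Monoid G] [Ring R] [Module k R] [IsScalarTower k R R] [SMulCommClass k R R]
  (F : MonoidAlgebra k G →ₗ[k] R)

theorem map_mul_of_map_single
    (h : ∀ g g', F (single (g * g') 1) = F (single g 1) * F (single g' 1))
    (x y : MonoidAlgebra k G) : F (x * y) = F x * F y := by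
  have := bilinear_ext (Φ := (LinearMap.mul k _).compr₂ F)
    (Ψ := (LinearMap.mul k R).compl₁₂ F F) fun g g' => by simpa using h g g'
  exact LinearMap.congr_fun₂ this x y

theorem map_lie_of_map_single
    (h : ∀ g g', F (single (g * g') 1) - F (single (g' * g) 1) =
      ⁅F (single g 1), F (single g' 1)⁆)
    (x y : MonoidAlgebra k G) : F ⁅x, y⁆ = ⁅F x, F y⁆ := by
  have := bilinear_ext
    (Φ := (LinearMap.mul k (MonoidAlgebra k G) - (LinearMap.mul k _).flip).compr₂ F)
    (Ψ := (LinearMap.mul k R).compl₁₂ F F - ((LinearMap.mul k R).compl₁₂ F F).flip)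
    fun g g' => by simpa [Ring.lie_def] using h g g'
  simpa [Ring.lie_def] using LinearMap.congr_fun₂ this x y

end MonoidAlgebra

theorem statement3_general (k G V : Type*) [Field k] [Group G] [AddCommGroup V] [Module k V]
    (ρ : Representation k G V)
    (A B : (m : ℕ) → G → Module.End k (⋀[k]^m V))
    (hA : ∀ (m : ℕ) (g : G) (v : Fin m → V),
      A m g (wedge k V m v) = wedge k V m fun i => ρ g (v i))
    (hB : ∀ (m : ℕ) (g : G) (v : Fin m → V),
      B m g (wedge k V m v) = ∑ p : Fin m, wedge k V m (Function.update v p (ρ g (v p))))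
    (Ahat Bhat : (m : ℕ) → MonoidAlgebra k G →ₗ[k] Module.End k (⋀[k]^m V))
    (hAhat : ∀ (m : ℕ) (g : G), Ahat m (MonoidAlgebra.single g 1) = A m g)
    (hBhat : ∀ (m : ℕ) (g : G), Bhat m (MonoidAlgebra.single g 1) = B m g) :
    let L : Set (MonoidAlgebra k G) :=
      {x | ∀ m ≤ Module.finrank k V, Ahat m x = Bhat m x}
    (0 : MonoidAlgebra k G) ∈ L ∧
      (∀ x y, x ∈ L → y ∈ L → x + y ∈ L) ∧
      (∀ (c : k) (x), x ∈ L → c • x ∈ L) ∧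
      ∀ x y, x ∈ L → y ∈ L → x * y - y * x ∈ L := by
  intro L
  have hAmul (m : ℕ) : ∀ x y, Ahat m (x * y) = Ahat m x * Ahat m y :=
    MonoidAlgebra.map_mul_of_map_single (R := Module.End k (⋀[k]^m V)) (Ahat m) fun g h => by
      simpa only [hAhat] using map_mul_of_apply_wedge ρ (A m) (hA m) g h
  have hBlie (m : ℕ) : ∀ x y, Bhat m ⁅x, y⁆ = ⁅Bhat m x, Bhat m y⁆ :=
    MonoidAlgebra.map_lie_of_map_single (R := Module.End k (⋀[k]^m V)) (Bhat m) fun g h => by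
      simpa only [hBhat] using sub_eq_lie_of_apply_wedge ρ (B m) (hB m) g h
  refine ⟨fun m _ => by rw [map_zero, map_zero], fun x y hx hy m hm => ?_,
    fun c x hx m hm => ?_, fun x y hx hy m hm => ?_⟩
  · rw [map_add, map_add, hx m hm, hy m hm]
  · rw [map_smul, map_smul, hx m hm]
  · calc Ahat m (x * y - y * x) = Ahat m x * Ahat m y - Ahat m y * Ahat m x := by
          rw [map_sub, hAmul, hAmul]
      _ = ⁅Bhat m x, Bhat m y⁆ := by rw [hx m hm, hy m hm, Ring.lie_def]
      _ = Bhat m (x * y - y * x) := by rw [← hBlie, Ring.lie_def]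

/-- The set `L(V)` of Lie elements of `k[G]` (those `x` with `A_m(x) = B_m(x)` for all
`m = 0, 1, …, dim V`) is a Lie subalgebra of `k[G]`: a `k`-linear subspace closed under
the commutator bracket `[x,y] = xy - yx`. -/
theorem statement3 (k G V : Type*) [Field k] [Group G] [AddCommGroup V] [Module k V]
    [FiniteDimensional k V] (ρ : Representation k G V)
    (A B : (m : ℕ) → G → Module.End k (⋀[k]^m V))
    (hA : ∀ (m : ℕ) (g : G) (v : Fin m → V),
      A m g (wedge k V m v) = wedge k V m fun i => ρ g (v i))
    (hB : ∀ (m : ℕ) (g : G) (v : Fin m → V),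
      B m g (wedge k V m v) = ∑ p : Fin m, wedge k V m (Function.update v p (ρ g (v p))))
    (Ahat Bhat : (m : ℕ) → MonoidAlgebra k G →ₗ[k] Module.End k (⋀[k]^m V))
    (hAhat : ∀ (m : ℕ) (g : G), Ahat m (MonoidAlgebra.single g 1) = A m g)
    (hBhat : ∀ (m : ℕ) (g : G), Bhat m (MonoidAlgebra.single g 1) = B m g) :
    let L : Set (MonoidAlgebra k G) :=
      {x | ∀ m ≤ Module.finrank k V, Ahat m x = Bhat m x}
    (0 : MonoidAlgebra k G) ∈ L ∧
      (∀ x y, x ∈ L → y ∈ L → x + y ∈ L) ∧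
      (∀ (c : k) (x), x ∈ L → c • x ∈ L) ∧
      ∀ x y, x ∈ L → y ∈ L → x * y - y * x ∈ L :=
  statement3_general k G V ρ A B hA hB Ahat Bhat hAhat hBhat
end

section
/- The set L(V) of Lie elements of k[G] is invariant under conjugation by G: if x ∈ L(V) and y ∈ G, then y·x·y⁻¹ ∈ L(V). Thus L(V) is a representation of G where group elements act by conjugation. -/
lemma wedge_span (k : Type*) [Field k] (V : Type*) [AddCommGroup V] [Module k V] (m : ℕ) :
    Submodule.span k (Set.range (wedge k V m)) = ⊤ := by
  apply Submodule.map_injective_of_injective (Submodule.injective_subtype (⋀[k]^m V))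
  rw [Submodule.map_span, Submodule.map_top, Submodule.range_subtype]
  have himg : (⋀[k]^m V).subtype '' Set.range (wedge k V m)
      = Set.range (ExteriorAlgebra.ιMulti k m (M := V)) := by
    ext u
    constructor
    · rintro ⟨_, ⟨v, rfl⟩, rfl⟩; exact ⟨v, rfl⟩
    · rintro ⟨v, rfl⟩; exact ⟨wedge k V m v, ⟨v, rfl⟩, rfl⟩
  rw [himg]
  exact ExteriorAlgebra.ιMulti_span_fixedDegree k m

lemma end_ext {k V : Type*} [Field k] [AddCommGroup V] [Module k V] {m : ℕ}
    {f g : Module.End k (⋀[k]^m V)}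
    (h : ∀ v : Fin m → V, f (wedge k V m v) = g (wedge k V m v)) : f = g := by
  exact LinearMap.ext_on_range (wedge_span k V m) h

/-- The set `L(V)` of Lie elements of `k[G]` is invariant under conjugation by elements
of `G`: if `x ∈ L(V)` and `y ∈ G` then `y·x·y⁻¹ ∈ L(V)`. -/
theorem statement6 (k G V : Type*) [Field k] [Group G] [AddCommGroup V] [Module k V]
    [FiniteDimensional k V] (ρ : Representation k G V)
    (A B : (m : ℕ) → G → Module.End k (⋀[k]^m V))
    (hA : ∀ (m : ℕ) (g : G) (v : Fin m → V),
      A m g (wedge k V m v) = wedge k V m fun i => ρ g (v i))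
    (hB : ∀ (m : ℕ) (g : G) (v : Fin m → V),
      B m g (wedge k V m v) = ∑ p : Fin m, wedge k V m (Function.update v p (ρ g (v p))))
    (Ahat Bhat : (m : ℕ) → MonoidAlgebra k G →ₗ[k] Module.End k (⋀[k]^m V))
    (hAhat : ∀ (m : ℕ) (g : G), Ahat m (MonoidAlgebra.single g 1) = A m g)
    (hBhat : ∀ (m : ℕ) (g : G), Bhat m (MonoidAlgebra.single g 1) = B m g) :
    let L : Set (MonoidAlgebra k G) :=
      {x | ∀ m ≤ Module.finrank k V, Ahat m x = Bhat m x}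
    ∀ x ∈ L, ∀ y : G,
      MonoidAlgebra.single y 1 * x * MonoidAlgebra.single y⁻¹ (1 : k) ∈ L := by
  intro L x hx y m hm
  -- conjugation identities for A and B
  have hAconj : ∀ g : G, A m (y * g * y⁻¹) = A m y * A m g * A m y⁻¹ := by
    intro g
    apply end_ext
    intro v
    simp only [Module.End.mul_apply, hA]
    simp [map_mul]
  have hBconj : ∀ g : G, B m (y * g * y⁻¹) = A m y * B m g * A m y⁻¹ := by
    intro g
    apply end_ext
    intro v
    rw [Module.End.mul_apply, Module.End.mul_apply, hA, hB, hB, map_sum]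
    refine Finset.sum_congr rfl fun p _ => ?_
    rw [hA]
    congr 1
    funext i
    by_cases hip : i = p
    · subst hip
      simp [map_mul]
    · simp [Function.update_of_ne hip, ← Module.End.mul_apply (ρ y) (ρ y⁻¹), ← map_mul]
  -- reduce to singles via linearity
  have key : ∀ (Chat : MonoidAlgebra k G →ₗ[k] Module.End k (⋀[k]^m V)) (C : G → Module.End k (⋀[k]^m V)),
      (∀ g, Chat (MonoidAlgebra.single g 1) = C g) →
      (∀ g, C (y * g * y⁻¹) = A m y * C g * A m y⁻¹) →
      ∀ z, Chat (MonoidAlgebra.single y 1 * z * MonoidAlgebra.single y⁻¹ (1 : k))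
        = A m y * Chat z * A m y⁻¹ := by
    intro Chat C hC hconj z
    have := LinearMap.congr_fun (f :=
      (Chat.comp ((LinearMap.mulRight k (MonoidAlgebra.single y⁻¹ (1:k))).comp
        (LinearMap.mulLeft k (MonoidAlgebra.single y (1:k))))))
      (g := (LinearMap.mulRight k (A m y⁻¹)).comp ((LinearMap.mulLeft k (A m y)).comp Chat))
      ?_ z
    · simpa using this
    · apply MonoidAlgebra.lhom_ext'
      intro g
      apply LinearMap.ext_ring
      simp only [LinearMap.comp_apply, LinearMap.mulLeft_apply, LinearMap.mulRight_apply,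
        LinearMap.coe_comp, Function.comp_apply, MonoidAlgebra.lsingle_apply]
      rw [MonoidAlgebra.single_mul_single, MonoidAlgebra.single_mul_single]
      simp only [one_mul, mul_one, hC, hconj]
  have hAx := key (Ahat m) (A m) (hAhat m) hAconj x
  have hBx := key (Bhat m) (B m) (hBhat m) hBconj x
  rw [hAx, hBx, hx m hm]
end

section
/- For every n ≥ 2 and every pair of indices 1 ≤ i < j ≤ n, the element 1 − (ij) of the complex group algebra ℂ[S_n], where (ij) is the transposition exchanging i and j, is a Lie element with respect to the permutation representation: 1 − (ij) ∈ L_n. -/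
/-- The permutation representation of the symmetric group `S_n` on `ℂⁿ`: a permutation `σ`
sends the basis vector `xᵢ` to `x_{σ i}`, i.e. it acts on coordinate functions by
`(σ · v) i = v (σ⁻¹ i)`. -/
noncomputable def permRep (n : ℕ) : Representation ℂ (Equiv.Perm (Fin n)) (Fin n → ℂ) where
  toFun σ := LinearMap.funLeft ℂ ℂ ⇑σ⁻¹
  map_one' := by ext v i; simp [LinearMap.funLeft]
  map_mul' σ τ := by ext v i; simp [LinearMap.funLeft]

namespace AlternatingMap

variable {R M N ι : Type*} [CommSemiring R] [AddCommMonoid M] [Module R M]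
  [AddCommMonoid N] [Module R N] [DecidableEq ι] (f : M [⋀^ι]→ₗ[R] N)

theorem map_update_smul_update_smul_eq_zero (v : ι → M) {p q : ι} (hpq : p ≠ q)
    (a b : R) (u : M) : f (Function.update (Function.update v p (a • u)) q (b • u)) = 0 := by
  have hu : Function.update (Function.update v q u) p u p =
      Function.update (Function.update v q u) p u q := by
    rw [Function.update_self, Function.update_of_ne hpq.symm, Function.update_self]
  rw [f.map_update_smul, Function.update_comm hpq, f.map_update_smul,
    f.map_eq_zero_of_eq _ hu hpq, smul_zero, smul_zero]

theorem map_piecewise_smul_eq_zero (v : ι → M) (c : ι → R) (u : M) {s : Finset ι}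
    (hs : 1 < s.card) : f (s.piecewise (fun p => c p • u) v) = 0 := by
  obtain ⟨p, hp, q, hq, hpq⟩ := Finset.one_lt_card.mp hs
  convert f.map_update_smul_update_smul_eq_zero (s.piecewise (fun p => c p • u) v) hpq
    (c p) (c q) u using 2
  ext k
  rcases eq_or_ne k q with rfl | hkq
  · simp [hq]
  · rcases eq_or_ne k p with rfl | hkp <;> simp [*]

theorem map_add_smul_const [Fintype ι] (v : ι → M) (c : ι → R) (u : M) :
    f (fun p => v p + c p • u) = f v + ∑ p, c p • f (Function.update v p u) := by
  have hsmall : ∀ s ∉ insert ∅ (Finset.univ.image fun p : ι => ({p} : Finset ι)),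
      f (s.piecewise (fun p => c p • u) v) = 0 := by
    intro s hs
    refine f.map_piecewise_smul_eq_zero v c u (not_le.mp fun h => hs ?_)
    rcases Nat.le_one_iff_eq_zero_or_eq_one.mp h with h | h
    · simp [Finset.card_eq_zero.mp h]
    · obtain ⟨p, rfl⟩ := Finset.card_eq_one.mp h
      simp
  have hexpand := f.toMultilinearMap.map_add_univ (fun p => c p • u) v
  rw [coe_multilinearMap] at hexpand
  rw [show (fun p => v p + c p • u) = (fun p => c p • u) + v from funext fun _ => add_comm _ _,
    hexpand, ← Finset.sum_subset (Finset.subset_univ _) fun s _ hs => hsmall s hs,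
    Finset.sum_insert (by simp), Finset.sum_image fun _ _ _ _ h => Finset.singleton_injective h]
  simp [Finset.piecewise_singleton, f.map_update_smul]

end AlternatingMap

theorem wedge_eq_ιMulti (k : Type*) [Field k] (V : Type*) [AddCommGroup V] [Module k V]
    (m : ℕ) :
    wedge k V m = exteriorPower.ιMulti k m :=
  rfl

theorem permRep_swap_apply {n : ℕ} (i j : Fin n) (w : Fin n → ℂ) :
    permRep n (Equiv.swap i j) w = w + (w j - w i) • (Pi.single i 1 - Pi.single j 1) := by
  ext k
  change w (Equiv.swap i j k) = _
  rcases eq_or_ne k i with rfl | hki <;> rcases eq_or_ne k j with rfl | hkj <;>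
    simp [Equiv.swap_apply_of_ne_of_ne, *]

theorem statement8_general (n : ℕ) (i j : Fin n)
    (A B : (m : ℕ) → Equiv.Perm (Fin n) → Module.End ℂ (⋀[ℂ]^m (Fin n → ℂ)))
    (hA : ∀ (m : ℕ) (σ : Equiv.Perm (Fin n)) (v : Fin m → (Fin n → ℂ)),
      A m σ (wedge ℂ (Fin n → ℂ) m v) = wedge ℂ (Fin n → ℂ) m fun p => permRep n σ (v p))
    (hB : ∀ (m : ℕ) (σ : Equiv.Perm (Fin n)) (v : Fin m → (Fin n → ℂ)),
      B m σ (wedge ℂ (Fin n → ℂ) m v) =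
        ∑ p : Fin m, wedge ℂ (Fin n → ℂ) m (Function.update v p (permRep n σ (v p))))
    (Ahat Bhat : (m : ℕ) →
      MonoidAlgebra ℂ (Equiv.Perm (Fin n)) →ₗ[ℂ] Module.End ℂ (⋀[ℂ]^m (Fin n → ℂ)))
    (hAhat : ∀ (m : ℕ) (σ : Equiv.Perm (Fin n)), Ahat m (MonoidAlgebra.single σ 1) = A m σ)
    (hBhat : ∀ (m : ℕ) (σ : Equiv.Perm (Fin n)), Bhat m (MonoidAlgebra.single σ 1) = B m σ) :
    ∀ m ≤ n,
      Ahat m (1 - MonoidAlgebra.single (Equiv.swap i j) 1) =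
        Bhat m (1 - MonoidAlgebra.single (Equiv.swap i j) 1) := by
  intro m _
  rw [MonoidAlgebra.one_def, map_sub, map_sub, hAhat, hAhat, hBhat, hBhat]
  refine LinearMap.ext_on (exteriorPower.ιMulti_span ℂ m _) ?_
  rintro _ ⟨v, rfl⟩
  rw [← wedge_eq_ιMulti]
  simp only [LinearMap.sub_apply, hA, hB, map_one, Module.End.one_apply,
    Function.update_eq_self, permRep_swap_apply]
  simp only [wedge_eq_ιMulti, AlternatingMap.map_add_smul_const, AlternatingMap.map_update_add,
    AlternatingMap.map_update_smul, Function.update_eq_self, Finset.sum_add_distrib]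
  rw [sub_add_cancel_left, sub_add_cancel_left]

/-- For `n ≥ 2` and any pair of indices `i < j`, the element `1 - (ij)` of the complex group
algebra `ℂ[S_n]` is a Lie element with respect to the permutation representation:
`A_m(1 - (ij)) = B_m(1 - (ij))` for all `m = 0, 1, …, n`. -/
theorem statement8 (n : ℕ) (hn : 2 ≤ n) (i j : Fin n) (hij : i < j)
    (A B : (m : ℕ) → Equiv.Perm (Fin n) → Module.End ℂ (⋀[ℂ]^m (Fin n → ℂ)))
    (hA : ∀ (m : ℕ) (σ : Equiv.Perm (Fin n)) (v : Fin m → (Fin n → ℂ)),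
      A m σ (wedge ℂ (Fin n → ℂ) m v) = wedge ℂ (Fin n → ℂ) m fun p => permRep n σ (v p))
    (hB : ∀ (m : ℕ) (σ : Equiv.Perm (Fin n)) (v : Fin m → (Fin n → ℂ)),
      B m σ (wedge ℂ (Fin n → ℂ) m v) =
        ∑ p : Fin m, wedge ℂ (Fin n → ℂ) m (Function.update v p (permRep n σ (v p))))
    (Ahat Bhat : (m : ℕ) →
      MonoidAlgebra ℂ (Equiv.Perm (Fin n)) →ₗ[ℂ] Module.End ℂ (⋀[ℂ]^m (Fin n → ℂ)))
    (hAhat : ∀ (m : ℕ) (σ : Equiv.Perm (Fin n)), Ahat m (MonoidAlgebra.single σ 1) = A m σ)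
    (hBhat : ∀ (m : ℕ) (σ : Equiv.Perm (Fin n)), Bhat m (MonoidAlgebra.single σ 1) = B m σ) :
    ∀ m ≤ n,
      Ahat m (1 - MonoidAlgebra.single (Equiv.swap i j) 1) =
        Bhat m (1 - MonoidAlgebra.single (Equiv.swap i j) 1) :=
  statement8_general n i j A B hA hB Ahat Bhat hAhat hBhat
end
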